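/- arXiv:2110.05778 — 3 statements merged into one kernel-verified Lean document; each statement's English description precedes it below -/
import Mathlib

section
/- Assume the kernel K* := K − α_{ν*}^{-1} is considered, where e_{ν*} = 1 is the constant function and the Fourier weights satisfy inf α_ν > 0 and the pointwise summability condition. Then every f in the RKHS H(K*) has ∫_E f dρ = 0, and H(1) ∩ H(K*) = {0}. -/
/-! The weight condition `inf α > 0` makes the coefficient sequence of `f ∈ H(K*)` square-summable,
so the pointwise expansion `f = ∑ c ν e ν` is also an expansion in the Hilbert basis `(e ν)` of
`L²(ρ)`; the two limits agree a.e. along a subsequence. Since `e ν* = 1`,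
`∫ f dρ = ⟪e ν*, f⟫ = c ν* = 0`, and a constant in `H(K*)` equals its own integral. -/

open MeasureTheory
open scoped lp

namespace MeasureTheory.Lp

variable {α G : Type*} [MeasurableSpace α] {μ : Measure α} [NormedAddCommGroup G]
  {p : ENNReal}

theorem coeFn_finset_sum {ι : Type*} (s : Finset ι) (F : ι → Lp G p μ) :
    ⇑(∑ i ∈ s, F i) =ᵐ[μ] fun x => ∑ i ∈ s, F i x := by
  classical
  induction s using Finset.induction_on with
  | empty => simpa [Pi.zero_def] using Lp.coeFn_zero G p μ
  | insert a s ha ih =>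
    rw [Finset.sum_insert ha]
    filter_upwards [Lp.coeFn_add (F a) (∑ i ∈ s, F i), ih] with x hadd hsum
    rw [hadd, Pi.add_apply, hsum, Finset.sum_insert ha]

theorem ae_eq_of_hasSum [Fact (1 ≤ p)] {F : ℕ → Lp G p μ} {g : Lp G p μ} {f : α → G}
    (hg : HasSum F g) (hf : ∀ᵐ x ∂μ, HasSum (fun n => F n x) (f x)) : f =ᵐ[μ] g := by
  obtain ⟨ns, hns, hae⟩ :=
    (tendstoInMeasure_of_tendsto_Lp hg.tendsto_sum_nat).exists_seq_tendsto_ae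
  have hpartial : ∀ᵐ x ∂μ, ∀ n, (∑ i ∈ Finset.range n, F i : Lp G p μ) x
      = ∑ i ∈ Finset.range n, F i x :=
    ae_all_iff.2 fun n => coeFn_finset_sum _ F
  filter_upwards [hf, hae, hpartial] with x hfx hgx hpx
  refine tendsto_nhds_unique ((hfx.tendsto_sum_nat).comp hns.tendsto_atTop) ?_
  simpa only [Function.comp_def, hpx] using hgx

end MeasureTheory.Lp

theorem memℓp_two_of_summable_mul_sq {ι : Type*} {c α : ι → ℝ} {ε : ℝ} (hε : 0 < ε) (hα : ∀ ν, ε ≤ α ν)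
    (hc : Summable fun ν => α ν * c ν ^ 2) : Memℓp c 2 := by
  have hsq : Summable fun ν => c ν ^ 2 := by
    refine (hc.mul_left ε⁻¹).of_nonneg_of_le (fun ν => sq_nonneg _) fun ν => ?_
    rw [← mul_assoc, ← div_eq_inv_mul]
    exact le_mul_of_one_le_left (sq_nonneg _) ((one_le_div hε).2 (hα ν))
  refine memℓp_gen ?_
  simpa only [ENNReal.toReal_ofNat, Real.rpow_two, Real.norm_eq_abs, sq_abs] using hsq

section L2

variable {E : Type*} [MeasurableSpace E] {ρ : Measure E}

theorem HilbertBasis.ae_eq_repr_symm_of_hasSum (b : HilbertBasis ℕ ℝ (Lp ℝ 2 ρ))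
    {e : ℕ → E → ℝ} (hb : ∀ ν, b ν =ᵐ[ρ] e ν) (c : ℓ²(ℕ, ℝ)) {f : E → ℝ}
    (hf : ∀ x, HasSum (fun ν => c ν * e ν x) (f x)) : f =ᵐ[ρ] b.repr.symm c := by
  refine Lp.ae_eq_of_hasSum (b.hasSum_repr_symm c) ?_
  have hterm : ∀ᵐ x ∂ρ, ∀ ν, (c ν • b ν : Lp ℝ 2 ρ) x = c ν * e ν x :=
    ae_all_iff.2 fun ν => by
      filter_upwards [Lp.coeFn_smul (c ν) (b ν), hb ν] with x hsmul he
      rw [hsmul, Pi.smul_apply, he, smul_eq_mul]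
  filter_upwards [hterm] with x hx
  simpa only [hx] using hf x

theorem integral_eq_inner_of_ae_eq_one {u : Lp ℝ 2 ρ} (hu : u =ᵐ[ρ] fun _ => 1) (g : Lp ℝ 2 ρ) :
    ∫ x, g x ∂ρ = inner ℝ u g := by
  rw [L2.inner_def]
  refine integral_congr_ae ?_
  filter_upwards [hu] with x hx
  simp [hx]

end L2

theorem integral_zero_on_Hstar_general
    {E : Type*} [MeasurableSpace E] (ρ : Measure E) [IsProbabilityMeasure ρ]
    (e : ℕ → E → ℝ) (he : ∀ ν, MemLp (e ν) 2 ρ)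
    (horth : Orthonormal ℝ fun ν => (he ν).toLp (e ν))
    (hbasis : (Submodule.span ℝ
      (Set.range fun ν => (he ν).toLp (e ν))).topologicalClosure = ⊤)
    (νstar : ℕ) (hstar : e νstar = fun _ => 1)
    (α : ℕ → ℝ)
    (hinf : ∃ ε > 0, ∀ ν, ε ≤ α ν)
    -- `HKstar` is the RKHS of the kernel `K* = K - α_{ν*}⁻¹`, described via
    -- its characterization as a subspace of `L²(ρ)`:
    (HKstar : Set (E → ℝ))
    (hHKstar : HKstar = {f : E → ℝ | ∃ c : ℕ → ℝ, c νstar = 0 ∧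
      (Summable fun ν => α ν * (c ν) ^ 2) ∧
      ∀ x : E, HasSum (fun ν => c ν * e ν x) (f x)}) :
    (∀ f ∈ HKstar, ∫ x, f x ∂ρ = 0) ∧
      ∀ f ∈ HKstar, (∃ a : ℝ, ∀ x, f x = a) → ∀ x, f x = 0 := by
  obtain ⟨ε, hε, hεα⟩ := hinf
  have hsp : ⊤ ≤ (Submodule.span ℝ (Set.range fun ν => (he ν).toLp (e ν))).topologicalClosure :=
    hbasis.ge
  set b := HilbertBasis.mk horth hsp
  have hb : ∀ ν, b ν =ᵐ[ρ] e ν := fun ν => by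
    rw [HilbertBasis.coe_mk horth hsp]
    exact (he ν).coeFn_toLp
  have hmean : ∀ f ∈ HKstar, ∫ x, f x ∂ρ = 0 := by
    rw [hHKstar]
    rintro f ⟨c, hc_star, hc_weighted, hf⟩
    let c₂ : ℓ²(ℕ, ℝ) := ⟨c, memℓp_two_of_summable_mul_sq hε hεα hc_weighted⟩
    have hone : b νstar =ᵐ[ρ] fun _ => 1 := hstar ▸ hb νstar
    calc ∫ x, f x ∂ρ = ∫ x, b.repr.symm c₂ x ∂ρ :=
          integral_congr_ae (b.ae_eq_repr_symm_of_hasSum hb c₂ hf)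
      _ = b.repr (b.repr.symm c₂) νstar :=
          (integral_eq_inner_of_ae_eq_one hone _).trans (b.repr_apply_apply _ _).symm
      _ = 0 := by rw [LinearIsometryEquiv.apply_symm_apply]; exact hc_star
  refine ⟨hmean, ?_⟩
  rintro f hf ⟨a, hfa⟩ x
  have hconst : ∫ y, f y ∂ρ = a := by simp [hfa]
  rw [hfa x, ← hconst, hmean f hf]

theorem integral_zero_on_Hstar
    {E : Type*} [MeasurableSpace E] (ρ : Measure E) [IsProbabilityMeasure ρ]
    (e : ℕ → E → ℝ) (he : ∀ ν, MemLp (e ν) 2 ρ)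
    (horth : Orthonormal ℝ fun ν => (he ν).toLp (e ν))
    (hbasis : (Submodule.span ℝ
      (Set.range fun ν => (he ν).toLp (e ν))).topologicalClosure = ⊤)
    (νstar : ℕ) (hstar : e νstar = fun _ => 1)
    (α : ℕ → ℝ) (hα : ∀ ν, 0 < α ν)
    (hinf : ∃ ε > 0, ∀ ν, ε ≤ α ν)
    (hpt : ∀ x : E, Summable fun ν => (α ν)⁻¹ * (e ν x) ^ 2)
    -- `HKstar` is the RKHS of the kernel `K* = K - α_{ν*}⁻¹`, described via
    -- its characterization as a subspace of `L²(ρ)`: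
    (HKstar : Set (E → ℝ))
    (hHKstar : HKstar = {f : E → ℝ | ∃ c : ℕ → ℝ, c νstar = 0 ∧
      (Summable fun ν => α ν * (c ν) ^ 2) ∧
      ∀ x : E, HasSum (fun ν => c ν * e ν x) (f x)}) :
    (∀ f ∈ HKstar, ∫ x, f x ∂ρ = 0) ∧
      ∀ f ∈ HKstar, (∃ a : ℝ, ∀ x, f x = a) → ∀ x, f x = 0 :=
  integral_zero_on_Hstar_general ρ e he horth hbasis νstar hstar α hinf HKstar hHKstar
end

section
/- Let k_j* be reproducing kernels on ℝ×ℝ with k_j*(x,x) ≥ 0, and suppose for x, y ∈ ℝ^ℕ that Σ_j k_j*(x_j,x_j) < ∞ and Σ_j k_j*(y_j,y_j) < ∞. Then the sum over all finite subsets u of ℕ of Π_{j∈u} |k_j*(x_j,y_j)| is finite, bounded by (Π_j (1+k_j*(x_j,x_j)))^{1/2} (Π_j (1+k_j*(y_j,y_j)))^{1/2}. -/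
/-!
Cauchy–Schwarz for the positive semidefinite kernel `k j` gives
`k j (x j) (y j) ^ 2 ≤ k j (x j) (x j) * k j (y j) (y j)`, hence
`(1 + |k j (x j) (y j)|) ^ 2 ≤ (1 + k j (x j) (x j)) * (1 + k j (y j) (y j))` by AM–GM.
Expanding `∏ j, (1 + c j)` turns the sum over finite sets `u` of `∏ j ∈ u, c j` into the
infinite product `∏' j, (1 + c j)`, and the factorwise bound compares its square with the
product of the two other infinite products.
-/

open Finset

def IsPosSemidefKernel {α : Type*} (K : α → α → ℝ) : Prop :=
  ∀ (n : ℕ) (pts : Fin n → α) (a : Fin n → ℝ),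
    0 ≤ ∑ i, ∑ l, a i * a l * K (pts i) (pts l)

namespace IsPosSemidefKernel

variable {α : Type*} {K : α → α → ℝ}

theorem diag_nonneg (hK : IsPosSemidefKernel K) (x : α) : 0 ≤ K x x := by
  simpa using hK 1 ![x] ![1]

theorem sq_le_mul_diag (hK : IsPosSemidefKernel K) (hsym : ∀ x y, K x y = K y x) (x y : α) :
    K x y ^ 2 ≤ K x x * K y y := by
  -- the Gram form at the points `x, y` with weights `1, t` is a nonnegative quadratic in `t`
  have hquad : ∀ t : ℝ, 0 ≤ K y y * (t * t) + 2 * K x y * t + K x x := by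
    intro t
    have := hK 2 ![x, y] ![1, t]
    simp only [Fin.sum_univ_two, Matrix.cons_val_zero, Matrix.cons_val_one] at this
    rw [hsym y x] at this
    linarith
  have := discrim_le_zero hquad
  rw [discrim] at this
  linarith

end IsPosSemidefKernel

theorem le_add_div_two_of_sq_le_mul {a b c : ℝ} (ha : 0 ≤ a) (hb : 0 ≤ b)
    (h : c ^ 2 ≤ a * b) : c ≤ (a + b) / 2 := by
  nlinarith [sq_nonneg (a - b)]

section

variable {ι : Type*} {a b f : ι → ℝ}

theorem prod_one_add_le_tprod_one_add (ha : ∀ i, 0 ≤ a i) (has : Summable a) (s : Finset ι) :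
    ∏ i ∈ s, (1 + a i) ≤ ∏' i, (1 + a i) := by
  have hprod := summable_finsetProd_of_summable_nonneg ha has
  rw [prod_one_add, tprod_one_add hprod]
  exact hprod.sum_le_tsum _ fun t _ => prod_nonneg fun i _ => ha i

theorem prod_one_add_sq_le (ha : ∀ i, 0 ≤ a i) (hb : ∀ i, 0 ≤ b i)
    (hfab : ∀ i, f i ^ 2 ≤ a i * b i) (s : Finset ι) :
    (∏ i ∈ s, (1 + f i)) ^ 2 ≤ (∏ i ∈ s, (1 + a i)) * ∏ i ∈ s, (1 + b i) := by
  rw [← prod_pow, ← prod_mul_distrib]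
  refine prod_le_prod (fun i _ => sq_nonneg _) fun i _ => ?_
  have := le_add_div_two_of_sq_le_mul (ha i) (hb i) (hfab i)
  nlinarith [hfab i]

theorem tsum_finsetProd_le_sqrt_mul_sqrt (ha : ∀ i, 0 ≤ a i) (hb : ∀ i, 0 ≤ b i)
    (hf : ∀ i, 0 ≤ f i) (has : Summable a) (hbs : Summable b)
    (hfab : ∀ i, f i ^ 2 ≤ a i * b i) :
    (Summable fun s : Finset ι => ∏ i ∈ s, f i) ∧
      ∑' s : Finset ι, ∏ i ∈ s, f i ≤ √(∏' i, (1 + a i)) * √(∏' i, (1 + b i)) := by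
  have hfs : Summable f :=
    ((has.add hbs).div_const 2).of_nonneg_of_le hf
      fun i => le_add_div_two_of_sq_le_mul (ha i) (hb i) (hfab i)
  have hprod := summable_finsetProd_of_summable_nonneg hf hfs
  have hA := prod_one_add_le_tprod_one_add ha has
  have hB := prod_one_add_le_tprod_one_add hb hbs
  have hA₀ : 0 ≤ ∏' i, (1 + a i) := tprod_nonneg fun i => by linarith [ha i]
  have hB₀ : 0 ≤ ∏' i, (1 + b i) := tprod_nonneg fun i => by linarith [hb i]
  refine ⟨hprod, ?_⟩
  calc ∑' s, ∏ i ∈ s, f i = ∏' i, (1 + f i) := (tprod_one_add hprod).symm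
    _ ≤ √((∏' i, (1 + a i)) * ∏' i, (1 + b i)) := by
      refine le_of_tendsto' (multipliable_one_add_of_summable_prod hprod).hasProd fun s => ?_
      rw [Real.le_sqrt (prod_nonneg fun i _ => by linarith [hf i]) (mul_nonneg hA₀ hB₀)]
      exact (prod_one_add_sq_le ha hb hfab s).trans <|
        mul_le_mul (hA s) (hB s) (prod_nonneg fun i _ => by linarith [hb i]) hA₀
    _ = √(∏' i, (1 + a i)) * √(∏' i, (1 + b i)) := Real.sqrt_mul hA₀ _

end

theorem summable_prod_over_finsets_general
    (k : ℕ → ℝ → ℝ → ℝ)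
    (hsym : ∀ j x y, k j x y = k j y x)
    (hpsd : ∀ (j : ℕ) (n : ℕ) (pts : Fin n → ℝ) (a : Fin n → ℝ),
      0 ≤ ∑ i, ∑ l, a i * a l * k j (pts i) (pts l))
    (x y : ℕ → ℝ)
    (hx : Summable fun j => k j (x j) (x j))
    (hy : Summable fun j => k j (y j) (y j)) :
    (Summable fun u : Finset ℕ => ∏ j ∈ u, |k j (x j) (y j)|) ∧
      ∑' u : Finset ℕ, ∏ j ∈ u, |k j (x j) (y j)| ≤
        Real.sqrt (∏' j, (1 + k j (x j) (x j))) *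
          Real.sqrt (∏' j, (1 + k j (y j) (y j))) := by
  have hK : ∀ j, IsPosSemidefKernel (k j) := hpsd
  exact tsum_finsetProd_le_sqrt_mul_sqrt (fun j => (hK j).diag_nonneg _)
    (fun j => (hK j).diag_nonneg _) (fun _ => abs_nonneg _) hx hy
    fun j => (sq_abs _).trans_le <| (hK j).sq_le_mul_diag (hsym j) _ _

theorem summable_prod_over_finsets
    (k : ℕ → ℝ → ℝ → ℝ)
    (hsym : ∀ j x y, k j x y = k j y x)
    (hpsd : ∀ (j : ℕ) (n : ℕ) (pts : Fin n → ℝ) (a : Fin n → ℝ),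
      0 ≤ ∑ i, ∑ l, a i * a l * k j (pts i) (pts l))
    (hnonneg : ∀ j x, 0 ≤ k j x x)
    (x y : ℕ → ℝ)
    (hx : Summable fun j => k j (x j) (x j))
    (hy : Summable fun j => k j (y j) (y j)) :
    (Summable fun u : Finset ℕ => ∏ j ∈ u, |k j (x j) (y j)|) ∧
      ∑' u : Finset ℕ, ∏ j ∈ u, |k j (x j) (y j)| ≤
        Real.sqrt (∏' j, (1 + k j (x j) (x j))) *
          Real.sqrt (∏' j, (1 + k j (y j) (y j))) :=
  summable_prod_over_finsets_general k hsym hpsd x y hx hy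
end

section
/- Suppose the Fourier weights satisfy the exponential growth condition α_{ν,j} = 2^{r_j ν} for ν ≥ 1 with r_j > 0 and Σ_j 2^{-r_j} < ∞, together with Σ_j |α_{0,j} − 1| < ∞. Then the maximal domain 𝒳 = { x ∈ ℝ^ℕ : Σ_j k_j*(x_j,x_j) < ∞ } of the tensor product Hermite kernel equals the weighted ℓ² space { x ∈ ℝ^ℕ : Σ_j 2^{-r_j} x_j² < ∞ }. -/
/-!
Since `h₁(x) = x`, the `ν = 1` terms of `Σ_j k_j*(x_j,x_j)` already form `Σ_j 2^{-r_j} x_j²`.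
Conversely, the three-term recurrence `√(n+2) h_{n+2} = x h_{n+1} - √(n+1) h_n` gives
`|h_{n+1}(x)| ≤ max(1,|x|) ∏_{k<n} (1 + |x|/√(k+2))`. These factors tend to `1`, so every
`k_j*(x_j,x_j)` is finite by the ratio test. Bounding each factor crudely by `1 + |x|` shows
`k_j*(x_j,x_j) ≤ 2 · 2^{-r_j} (1 + x_j²)` as soon as `2^{-r_j} (1 + x_j²) ≤ 1/4`, which holds
for all but finitely many `j`; the right-hand sides are summable.
-/

open Nat Finset

/-- The `L²(μ₀)`-normalized Hermite polynomial, given by its explicit representation. -/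
noncomputable def hermiteNormalized (ν : ℕ) (x : ℝ) : ℝ :=
  Real.sqrt (ν !) * ∑ k ∈ Finset.range (ν / 2 + 1),
    (-1 : ℝ) ^ k * x ^ (ν - 2 * k) / ((2 : ℝ) ^ k * (k ! : ℝ) * ((ν - 2 * k)! : ℝ))

open Filter Topology

lemma hermiteNormalized_zero (x : ℝ) : hermiteNormalized 0 x = 1 := by
  simp [hermiteNormalized]

lemma hermiteNormalized_one (x : ℝ) : hermiteNormalized 1 x = x := by
  simp [hermiteNormalized]

-- Set to `0` for `2k > n`, so that `∑ k ∈ range N` gives the same sum for every `N > n / 2`.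
noncomputable def hermiteCoeff (n k : ℕ) : ℝ :=
  if 2 * k ≤ n then (-1) ^ k / (2 ^ k * k ! * (n - 2 * k)!) else 0

lemma hermiteNormalized_eq_sum (n : ℕ) {N : ℕ} (hN : n / 2 < N) (x : ℝ) :
    hermiteNormalized n x = √(n ! : ℝ) * ∑ k ∈ range N, hermiteCoeff n k * x ^ (n - 2 * k) := by
  rw [hermiteNormalized, ← sum_subset (range_subset_range.2 hN)]
  · congr 1
    refine sum_congr rfl fun k hk => ?_
    rw [hermiteCoeff, if_pos (by grind)]
    ring
  · intro k _ hk
    rw [hermiteCoeff, if_neg (by grind), zero_mul]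

lemma hermiteCoeff_zero_right (n : ℕ) : hermiteCoeff n 0 = 1 / n ! := by
  simp [hermiteCoeff]

lemma hermiteCoeff_succ_succ (n k : ℕ) :
    (n + 2 : ℝ) * hermiteCoeff (n + 2) (k + 1) =
      hermiteCoeff (n + 1) (k + 1) - hermiteCoeff n k := by
  unfold hermiteCoeff
  rcases lt_trichotomy (2 * k) n with h | rfl | h
  · obtain ⟨m, rfl⟩ : ∃ m, n = 2 * k + 1 + m := ⟨n - 2 * k - 1, by omega⟩
    rw [if_pos (by omega), if_pos (by omega), if_pos (by omega),
      show 2 * k + 1 + m + 2 - 2 * (k + 1) = m + 1 by omega,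
      show 2 * k + 1 + m + 1 - 2 * (k + 1) = m by omega,
      show 2 * k + 1 + m - 2 * k = m + 1 by omega, factorial_succ m, factorial_succ k]
    push_cast
    field_simp
    ring
  · rw [if_pos (by omega), if_neg (by omega), if_pos (by omega), Nat.sub_self,
      show 2 * k + 2 - 2 * (k + 1) = 0 by omega, factorial_succ k]
    push_cast
    field_simp
    ring
  · rw [if_neg (by omega), if_neg (by omega), if_neg (by omega)]
    ring

lemma hermiteCoeff_mul_pow_succ_succ (n k : ℕ) (x : ℝ) :
    (n + 2 : ℝ) * (hermiteCoeff (n + 2) (k + 1) * x ^ (n + 2 - 2 * (k + 1))) =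
      x * (hermiteCoeff (n + 1) (k + 1) * x ^ (n + 1 - 2 * (k + 1))) -
        hermiteCoeff n k * x ^ (n - 2 * k) := by
  have hpow : hermiteCoeff (n + 1) (k + 1) * (x * x ^ (n + 1 - 2 * (k + 1))) =
      hermiteCoeff (n + 1) (k + 1) * x ^ (n - 2 * k) := by
    by_cases hk : 2 * (k + 1) ≤ n + 1
    · rw [← pow_succ' x, show n + 1 - 2 * (k + 1) + 1 = n - 2 * k by omega]
    · simp [hermiteCoeff, hk]
  rw [show n + 2 - 2 * (k + 1) = n - 2 * k by omega]
  linear_combination x ^ (n - 2 * k) * hermiteCoeff_succ_succ n k - hpow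

lemma sum_hermiteCoeff_mul_pow_succ_succ (n : ℕ) (x : ℝ) :
    (n + 2 : ℝ) * ∑ k ∈ range (n + 3), hermiteCoeff (n + 2) k * x ^ (n + 2 - 2 * k) =
      x * ∑ k ∈ range (n + 3), hermiteCoeff (n + 1) k * x ^ (n + 1 - 2 * k) -
        ∑ k ∈ range (n + 2), hermiteCoeff n k * x ^ (n - 2 * k) := by
  rw [sum_range_succ' _ (n + 2), sum_range_succ' _ (n + 2), mul_add, mul_add, mul_sum, mul_sum,
    sum_congr rfl fun k _ => hermiteCoeff_mul_pow_succ_succ n k x, sum_sub_distrib,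
    hermiteCoeff_zero_right, hermiteCoeff_zero_right, factorial_succ (n + 1)]
  push_cast
  field_simp
  ring

lemma hermiteNormalized_succ_succ (n : ℕ) (x : ℝ) :
    √(n + 2 : ℝ) * hermiteNormalized (n + 2) x =
      x * hermiteNormalized (n + 1) x - √(n + 1 : ℝ) * hermiteNormalized n x := by
  rw [hermiteNormalized_eq_sum (n + 2) (N := n + 3) (by omega),
    hermiteNormalized_eq_sum (n + 1) (N := n + 3) (by omega),
    hermiteNormalized_eq_sum n (N := n + 2) (by omega)]
  have hfac₂ : √((n + 2)! : ℝ) = √(n + 2 : ℝ) * √((n + 1)! : ℝ) := by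
    rw [factorial_succ (n + 1), Nat.cast_mul, Real.sqrt_mul (by positivity)]
    push_cast
    ring_nf
  have hfac₁ : √((n + 1)! : ℝ) = √(n + 1 : ℝ) * √(n ! : ℝ) := by
    rw [factorial_succ, Nat.cast_mul, Real.sqrt_mul (by positivity)]
    push_cast
    ring_nf
  have hsq : √(n + 2 : ℝ) * √(n + 2 : ℝ) = n + 2 := Real.mul_self_sqrt (by positivity)
  rw [hfac₂, hfac₁]
  linear_combination √(n + 1 : ℝ) * √(n ! : ℝ) * sum_hermiteCoeff_mul_pow_succ_succ n x +
    √(n + 1 : ℝ) * √(n ! : ℝ) *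
      (∑ k ∈ range (n + 3), hermiteCoeff (n + 2) k * x ^ (n + 2 - 2 * k)) * hsq

lemma norm_le_max_mul_prod_of_norm_add_two_le {E : Type*} [SeminormedAddGroup E] {a : ℕ → E}
    {c : ℕ → ℝ} (hc : ∀ n, 1 ≤ c n) (h : ∀ n, ‖a (n + 2)‖ ≤ c n * max ‖a n‖ ‖a (n + 1)‖)
    (n : ℕ) : max ‖a n‖ ‖a (n + 1)‖ ≤ max ‖a 0‖ ‖a 1‖ * ∏ k ∈ range n, c k := by
  induction n with
  | zero => simp
  | succ n ih =>
    have hmax : max ‖a n‖ ‖a (n + 1)‖ ≤ c n * max ‖a n‖ ‖a (n + 1)‖ :=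
      le_mul_of_one_le_left (by positivity) (hc n)
    rw [prod_range_succ, ← mul_assoc, mul_comm _ (c n)]
    calc max ‖a (n + 1)‖ ‖a (n + 2)‖ ≤ c n * max ‖a n‖ ‖a (n + 1)‖ :=
          max_le ((le_max_right _ _).trans hmax) (h n)
      _ ≤ _ := by gcongr; linarith [hc n]

lemma abs_hermiteNormalized_succ_succ_le (n : ℕ) (x : ℝ) :
    |hermiteNormalized (n + 2) x| ≤
      (1 + |x| / √(n + 2 : ℝ)) * max |hermiteNormalized n x| |hermiteNormalized (n + 1) x| := by
  set D := max |hermiteNormalized n x| |hermiteNormalized (n + 1) x|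
  have hs : 0 < √(n + 2 : ℝ) := by positivity
  have hs₁ : √(n + 1 : ℝ) ≤ √(n + 2 : ℝ) := Real.sqrt_le_sqrt (by linarith)
  have hrec : √(n + 2 : ℝ) * |hermiteNormalized (n + 2) x| ≤ (|x| + √(n + 2 : ℝ)) * D :=
    calc √(n + 2 : ℝ) * |hermiteNormalized (n + 2) x|
        = |x * hermiteNormalized (n + 1) x - √(n + 1 : ℝ) * hermiteNormalized n x| := by
          rw [← hermiteNormalized_succ_succ, abs_mul, abs_of_pos hs]
      _ ≤ |x| * |hermiteNormalized (n + 1) x| + √(n + 1 : ℝ) * |hermiteNormalized n x| := by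
          grw [abs_sub, abs_mul, abs_mul, abs_of_nonneg (Real.sqrt_nonneg _)]
      _ ≤ (|x| + √(n + 2 : ℝ)) * D := by
          rw [add_mul]
          gcongr
          · exact le_max_right _ _
          · exact le_max_left _ _
  rw [← mul_le_mul_iff_of_pos_left hs]
  refine hrec.trans_eq ?_
  rw [← mul_assoc, mul_add, mul_one, mul_div_cancel₀ _ hs.ne', add_comm]

lemma abs_hermiteNormalized_succ_le (n : ℕ) (x : ℝ) :
    |hermiteNormalized (n + 1) x| ≤ max 1 |x| * ∏ k ∈ range n, (1 + |x| / √(k + 2 : ℝ)) := by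
  have h := norm_le_max_mul_prod_of_norm_add_two_le (a := fun n => hermiteNormalized n x)
    (fun k => le_add_of_nonneg_right (by positivity))
    (fun k => abs_hermiteNormalized_succ_succ_le k x) n
  simp only [Real.norm_eq_abs, hermiteNormalized_zero, hermiteNormalized_one, abs_one] at h
  exact (le_max_right _ _).trans h

lemma summable_prod_range_of_tendsto {R : Type*} [NormedCommRing R] [CompleteSpace R]
    {b : ℕ → R} {ℓ : R} (hb : Tendsto b atTop (𝓝 ℓ)) (hℓ : ‖ℓ‖ < 1) :
    Summable fun n => ∏ k ∈ range n, b k := by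
  obtain ⟨q, hℓq, hq⟩ := exists_between hℓ
  refine summable_of_ratio_norm_eventually_le hq ?_
  filter_upwards [hb.norm.eventually_le_const hℓq] with n hn
  rw [prod_range_succ, mul_comm]
  exact (norm_mul_le _ _).trans (by gcongr)

-- The summand `α_{ν+1}⁻¹ h_{ν+1}(x)²` of `k*(x,x)` for `α_ν = 2^{sν}`, shifted to start at `ν = 0`.
noncomputable def hermiteKernelTerm (s x : ℝ) (ν : ℕ) : ℝ :=
  (2 : ℝ) ^ (-(s * ((ν : ℝ) + 1))) * hermiteNormalized (ν + 1) x ^ 2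

lemma hermiteKernelTerm_eq (s x : ℝ) (ν : ℕ) :
    hermiteKernelTerm s x ν = ((2 : ℝ) ^ (-s)) ^ (ν + 1) * hermiteNormalized (ν + 1) x ^ 2 := by
  rw [hermiteKernelTerm, ← Real.rpow_natCast ((2 : ℝ) ^ (-s)), ← Real.rpow_mul zero_le_two]
  push_cast
  ring_nf

lemma hermiteKernelTerm_zero (s x : ℝ) : hermiteKernelTerm s x 0 = (2 : ℝ) ^ (-s) * x ^ 2 := by
  simp [hermiteKernelTerm_eq, hermiteNormalized_one]

lemma hermiteKernelTerm_nonneg (s x : ℝ) (ν : ℕ) : 0 ≤ hermiteKernelTerm s x ν := by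
  unfold hermiteKernelTerm
  positivity

lemma hermiteKernelTerm_le (s x : ℝ) (ν : ℕ) :
    hermiteKernelTerm s x ν ≤ (2 : ℝ) ^ (-s) * max 1 |x| ^ 2 *
      ∏ k ∈ range ν, (2 : ℝ) ^ (-s) * (1 + |x| / √(k + 2 : ℝ)) ^ 2 := by
  rw [hermiteKernelTerm_eq, prod_mul_distrib, prod_const, card_range, prod_pow, ← sq_abs]
  grw [abs_hermiteNormalized_succ_le]
  exact le_of_eq (by ring)

lemma summable_hermiteKernelTerm {s : ℝ} (hs : 0 < s) (x : ℝ) :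
    Summable (hermiteKernelTerm s x) := by
  have hc : Tendsto (fun k : ℕ => (2 : ℝ) ^ (-s) * (1 + |x| / √(k + 2 : ℝ)) ^ 2)
      atTop (𝓝 ((2 : ℝ) ^ (-s) * (1 + 0) ^ 2)) := by
    have hsqrt : Tendsto (fun k : ℕ => √(k + 2 : ℝ)) atTop atTop :=
      Real.tendsto_sqrt_atTop.comp
        (tendsto_atTop_add_const_right _ _ tendsto_natCast_atTop_atTop)
    exact ((tendsto_const_nhds.div_atTop hsqrt).const_add 1).pow 2 |>.const_mul _
  have hlim : ‖(2 : ℝ) ^ (-s) * (1 + 0) ^ 2‖ < 1 := by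
    rw [add_zero, one_pow, mul_one, Real.norm_of_nonneg (by positivity)]
    exact Real.rpow_lt_one_of_one_lt_of_neg one_lt_two (neg_lt_zero.2 hs)
  exact .of_nonneg_of_le (hermiteKernelTerm_nonneg s x) (hermiteKernelTerm_le s x)
    ((summable_prod_range_of_tendsto hc hlim).mul_left _)

lemma tsum_hermiteKernelTerm_le {s x : ℝ} (h : (2 : ℝ) ^ (-s) * (1 + x ^ 2) ≤ 1 / 4) :
    ∑' ν, hermiteKernelTerm s x ν ≤ 2 * ((2 : ℝ) ^ (-s) * (1 + x ^ 2)) := by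
  have hM : max 1 |x| ^ 2 ≤ 1 + x ^ 2 := by
    rcases max_cases 1 |x| with ⟨hm, -⟩ | ⟨hm, -⟩ <;> rw [hm] <;>
      nlinarith [sq_abs x, sq_nonneg x]
  have hfactor (k : ℕ) : (2 : ℝ) ^ (-s) * (1 + |x| / √(k + 2 : ℝ)) ^ 2 ≤ 1 / 2 := by
    have hs : 1 ≤ √(k + 2 : ℝ) := Real.one_le_sqrt.2 (by linarith [k.cast_nonneg (α := ℝ)])
    have hc : (1 + |x| / √(k + 2 : ℝ)) ^ 2 ≤ 2 * (1 + x ^ 2) := by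
      grw [div_le_self (abs_nonneg x) hs]
      nlinarith [sq_nonneg (|x| - 1), sq_abs x]
    grw [hc]
    linarith
  have hterm (ν : ℕ) : hermiteKernelTerm s x ν ≤ (2 : ℝ) ^ (-s) * (1 + x ^ 2) * (1 / 2) ^ ν := by
    grw [hermiteKernelTerm_le, hM, prod_le_prod (fun k _ => by positivity) fun k _ => hfactor k,
      prod_const, card_range]
  have hgeom : Summable fun ν : ℕ => (2 : ℝ) ^ (-s) * (1 + x ^ 2) * (1 / 2) ^ ν :=
    (summable_geometric_two).mul_left _
  calc ∑' ν, hermiteKernelTerm s x ν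
      ≤ ∑' ν : ℕ, (2 : ℝ) ^ (-s) * (1 + x ^ 2) * (1 / 2) ^ ν :=
        (hgeom.of_nonneg_of_le (hermiteKernelTerm_nonneg s x) hterm).tsum_le_tsum hterm hgeom
    _ = 2 * ((2 : ℝ) ^ (-s) * (1 + x ^ 2)) := by rw [tsum_mul_left, tsum_geometric_two, mul_comm]

/-- In the exponential-growth case `α_{ν,j} = 2^{r_j ν}` (ν ≥ 1), the maximal domain of the
tensor product Hermite kernel, `𝒳 = {x : Σ_j k_j*(x_j,x_j) < ∞}` with
`k_j*(x,x) = Σ_{ν≥1} α_{ν,j}⁻¹ h_ν(x)²`, equals the weighted ℓ² space. -/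
theorem maximal_domain_exponential_growth
    (r : ℕ → ℝ) (hr : ∀ j, 0 < r j)
    (hsum : Summable fun j => (2 : ℝ) ^ (-r j)) :
    {x : ℕ → ℝ | Summable fun p : ℕ × ℕ =>
        (2 : ℝ) ^ (-(r p.2 * ((p.1 : ℝ) + 1))) * (hermiteNormalized (p.1 + 1) (x p.2)) ^ 2} =
      {x : ℕ → ℝ | Summable fun j => (2 : ℝ) ^ (-r j) * (x j) ^ 2} := by
  ext x
  change Summable (fun p : ℕ × ℕ => hermiteKernelTerm (r p.2) (x p.2) p.1) ↔ _
  constructor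
  · intro hx
    simpa [Function.comp_def, hermiteKernelTerm_zero] using
      hx.comp_injective (i := fun j => (0, j)) fun _ _ h => (Prod.ext_iff.1 h).2
  · intro hx
    have hb : Summable fun j => (2 : ℝ) ^ (-r j) * (1 + x j ^ 2) := by
      simpa only [mul_add, mul_one] using hsum.add hx
    refine (Equiv.prodComm ℕ ℕ).summable_iff.1 <|
      (summable_prod_of_nonneg fun _ => hermiteKernelTerm_nonneg _ _ _).2
        ⟨fun j => summable_hermiteKernelTerm (hr j) (x j),
          (hb.mul_left 2).of_norm_bounded_eventually ?_⟩
    filter_upwards [hb.tendsto_cofinite_zero.eventually_le_const (by norm_num : (0 : ℝ) < 1 / 4)]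
      with j hj
    rw [Real.norm_of_nonneg (tsum_nonneg fun _ => hermiteKernelTerm_nonneg _ _ _)]
    exact tsum_hermiteKernelTerm_le hj
end
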